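/- arXiv:cs/0612051 — 2 statements merged into one kernel-verified Lean document; each statement's English description precedes it below -/
import Mathlib

section
/- Suppose y ∈ GF(q^m)^v has rank w. Then the number of vectors z ∈ GF(q^m)^u such that the concatenation (y, z) ∈ GF(q^m)^{u+v} has rank s equals [u choose s-w]_q · A(m-w, s-w) · q^{wu}. -/
noncomputable def Aq (q m u : ℕ) : ℝ := ∏ i ∈ Finset.range u, ((q:ℝ)^m - (q:ℝ)^i)

noncomputable def Kq (q : ℕ) : ℝ := ∏' j : ℕ, (1 - ((q:ℝ))⁻¹ ^ (j+1))

noncomputable def gaussBinom (q n t : ℕ) : ℝ := Aq q n t / Aq q t t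

noncomputable def rk (Fq : Type*) {F : Type*} [Field Fq] [Field F] [Algebra Fq F] {n : ℕ} (x : Fin n → F) : ℕ :=
  Module.finrank Fq (Submodule.span Fq (Set.range x))

def IsElementary (Fq : Type*) {F : Type*} [Field Fq] [Field F] [Algebra Fq F] {n : ℕ} (V : Submodule F (Fin n → F)) : Prop :=
  ∃ b : Module.Basis (Fin (Module.finrank F V)) F V,
    ∀ i j, ((b i : Fin n → F) j) ∈ Set.range (algebraMap Fq F)

/-!
Let `W` be the span of `y`. Splitting `F ≃ W × F/W` compatibly with the quotient map shows that
`(y, z)` has rank `s` exactly when the image of `z` in the `(m - w)`-dimensional space `F/W` has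
rank `s - w`, while the `W`-components of `z` are arbitrary; they give the factor `q^{wu}`.
In an `n`-dimensional space the number `N(u, t)` of `u`-tuples of rank `t` satisfies
`N(u+1, t+1) = q^{t+1} N(u, t+1) + (q^n - q^t) N(u, t)`, according to whether the new vector lies in
the span of the others; this is the `q`-Pascal rule multiplied by `A(n, t+1)`, so
`N(u, t) = [u choose t]_q A(n, t)`.
-/

open Submodule Module

section QAnalog

theorem Aq_succ (q n t : ℕ) : Aq q n (t + 1) = Aq q n t * ((q : ℝ) ^ n - (q : ℝ) ^ t) :=
  Finset.prod_range_succ _ _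

theorem Aq_succ_succ (q n t : ℕ) :
    Aq q (n + 1) (t + 1) = ((q : ℝ) ^ (n + 1) - 1) * (q : ℝ) ^ t * Aq q n t := by
  have factor (i : ℕ) : (q : ℝ) ^ (n + 1) - (q : ℝ) ^ (i + 1) = q * ((q : ℝ) ^ n - (q : ℝ) ^ i) := by
    ring
  simp only [Aq, Finset.prod_range_succ', factor, Finset.prod_mul_distrib, Finset.prod_const,
    Finset.card_range]
  ring

theorem Aq_pos {q : ℕ} (hq : 1 < q) {n t : ℕ} (h : t ≤ n) : 0 < Aq q n t :=
  Finset.prod_pos fun i hi => sub_pos.mpr <|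
    pow_lt_pow_right₀ (by exact_mod_cast hq) ((Finset.mem_range.mp hi).trans_le h)

theorem gaussBinom_zero_right (q n : ℕ) : gaussBinom q n 0 = 1 := by
  simp [gaussBinom, Aq]

theorem gaussBinom_zero_succ (q t : ℕ) : gaussBinom q 0 (t + 1) = 0 := by
  simp [gaussBinom, Aq, Finset.prod_range_succ']

theorem gaussBinom_succ_succ {q : ℕ} (hq : 1 < q) (n t : ℕ) :
    gaussBinom q (n + 1) (t + 1) = (q : ℝ) ^ (t + 1) * gaussBinom q n (t + 1) + gaussBinom q n t := by
  have hq' : (1 : ℝ) < q := by exact_mod_cast hq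
  have h₁ : Aq q t t ≠ 0 := (Aq_pos hq le_rfl).ne'
  have h₂ : (q : ℝ) ^ (t + 1) - 1 ≠ 0 := (sub_pos.mpr (one_lt_pow₀ hq' t.succ_ne_zero)).ne'
  have h₃ : (q : ℝ) ^ t ≠ 0 := by positivity
  rw [gaussBinom, gaussBinom, gaussBinom, Aq_succ_succ, Aq_succ_succ, Aq_succ]
  field_simp
  ring

end QAnalog

section SpanRank

variable {K V : Type*} [DivisionRing K] [AddCommGroup V] [Module K V]

theorem Submodule.finrank_map_mkQ_add_finrank {W U : Submodule K V} (hWU : W ≤ U)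
    [FiniteDimensional K U] : finrank K (U.map W.mkQ) + finrank K W = finrank K U := by
  have h := LinearMap.finrank_range_add_finrank_ker (W.mkQ ∘ₗ U.subtype)
  rwa [LinearMap.range_comp, range_subtype, LinearMap.ker_comp, ker_mkQ,
    (comapSubtypeEquivOfLe hWU).finrank_eq] at h

theorem Set.finrank_union [FiniteDimensional K V] (s t : Set V) :
    (s ∪ t).finrank K = s.finrank K + ((span K s).mkQ '' t).finrank K := by
  have hmap : (span K (s ∪ t)).map (span K s).mkQ = span K ((span K s).mkQ '' t) := by
    rw [span_union, Submodule.map_sup, mkQ_map_self, bot_sup_eq, map_span]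
  rw [Set.finrank, Set.finrank, Set.finrank, ← hmap, add_comm,
    finrank_map_mkQ_add_finrank (span_mono subset_union_left)]

theorem Set.finrank_insert_of_mem {a : V} {s : Set V} (h : a ∈ span K s) :
    (insert a s).finrank K = s.finrank K := by
  rw [Set.finrank, Set.finrank, span_insert_eq_span h]

theorem Set.finrank_insert_of_notMem [FiniteDimensional K V] {a : V} {s : Set V}
    (h : a ∉ span K s) : (insert a s).finrank K = s.finrank K + 1 := by
  have ha : (span K s).mkQ a ≠ 0 := by rwa [mkQ_apply, ne_eq, Quotient.mk_eq_zero]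
  rw [Set.insert_eq, Set.union_comm, Set.finrank_union, Set.image_singleton]
  exact congrArg (_ + ·) (finrank_span_singleton ha)

theorem Set.finrank_eq_zero_iff {s : Set V} (hs : s.Finite) : s.finrank K = 0 ↔ s ⊆ {0} := by
  have := FiniteDimensional.span_of_finite K hs
  rw [Set.finrank, finrank_eq_zero, span_eq_bot]
  rfl

theorem natCard_finrank_range_eq_zero {ι : Type*} [Finite ι] :
    Nat.card {z : ι → V // (Set.range z).finrank K = 0} = 1 := by
  simp only [Set.finrank_eq_zero_iff (Set.finite_range _), Set.range_subset_singleton]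
  exact Nat.card_unique

end SpanRank

section QuotientSplitting

variable {K V : Type*} [DivisionRing K] [AddCommGroup V] [Module K V]

theorem Submodule.exists_linearEquiv_prod_quotient (W : Submodule K V) :
    ∃ g : (W × (V ⧸ W)) ≃ₗ[K] V, ∀ p, W.mkQ (g p) = p.2 := by
  obtain ⟨W', hW'⟩ := W.exists_isCompl
  refine ⟨((LinearEquiv.refl K W).prodCongr (quotientEquivOfIsCompl W W' hW')).trans
    (prodEquivOfIsCompl W W' hW'), fun p => ?_⟩
  simp

theorem Submodule.natCard_subtype_mkQ_comp {ι : Type*} [Finite ι] (W : Submodule K V)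
    (P : (ι → V ⧸ W) → Prop) :
    Nat.card {z : ι → V // P (W.mkQ ∘ z)} =
      Nat.card W ^ Nat.card ι * Nat.card {zb : ι → V ⧸ W // P zb} := by
  obtain ⟨g, hg⟩ := W.exists_linearEquiv_prod_quotient
  have hg' (x : V) : W.mkQ x = (g.symm x).2 := by simpa using hg (g.symm x)
  let e : {z : ι → V // P (W.mkQ ∘ z)} ≃ (ι → W) × {zb : ι → V ⧸ W // P zb} :=
    { toFun z := (fun i => (g.symm (z.1 i)).1, ⟨W.mkQ ∘ z.1, z.2⟩)
      invFun p := ⟨fun i => g (p.1 i, p.2.1 i), by simpa [Function.comp_def, hg] using p.2.2⟩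
      left_inv z := by ext i; simp [hg']
      right_inv p := by ext i <;> simp [hg] }
  rw [Nat.card_congr e, Nat.card_prod, Nat.card_fun]

end QuotientSplitting

theorem Fin.range_append {α : Type*} {m n : ℕ} (x : Fin m → α) (y : Fin n → α) :
    Set.range (Fin.append x y) = Set.range x ∪ Set.range y := by
  rw [← Set.Sum.elim_range, ← Fin.append_comp_sumElim]
  exact (finSumFinEquiv.surjective.range_comp _).symm

theorem natCard_subtype_fin_succ {α : Type*} [Fintype α] (u : ℕ) (P : (Fin (u + 1) → α) → Prop) :
    Nat.card {z // P z} = ∑ z' : Fin u → α, Nat.card {a // P (Fin.cons a z')} := by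
  rw [← Nat.card_sigma]
  refine Nat.card_congr <|
    ((Fin.consEquiv fun _ => α).symm.trans (Equiv.prodComm _ _)).subtypeEquiv (fun z => ?_) |>.trans
      (Equiv.subtypeProdEquivSigmaSubtype fun z' a => P (Fin.cons a z'))
  simp [Fin.consEquiv]

section Counting

variable {K V : Type*} [DivisionRing K] [Finite K] [AddCommGroup V] [Module K V]
  [FiniteDimensional K V]

theorem Set.natCard_span (S : Set V) : Nat.card (span K S) = Nat.card K ^ S.finrank K :=
  Module.natCard_eq_pow_finrank

theorem Submodule.natCard_notMem (W : Submodule K V) :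
    (Nat.card {a // a ∉ W} : ℝ) = (Nat.card K : ℝ) ^ finrank K V - (Nat.card K : ℝ) ^ finrank K W := by
  classical
  have := Module.finite_of_finite K (M := V)
  have h := Nat.card_congr (Equiv.sumCompl (· ∈ W))
  rw [Nat.card_sum, Module.natCard_eq_pow_finrank (K := K) (V := V),
    Module.natCard_eq_pow_finrank (K := K) (V := W)] at h
  rw [eq_sub_iff_add_eq']
  exact_mod_cast h

theorem natCard_finrank_insert_eq (S : Set V) (r : ℕ) :
    (Nat.card {a : V // (insert a S).finrank K = r + 1} : ℝ) =
      (if S.finrank K = r + 1 then (Nat.card K : ℝ) ^ (r + 1) else 0) +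
      (if S.finrank K = r then (Nat.card K : ℝ) ^ finrank K V - (Nat.card K : ℝ) ^ r else 0) := by
  classical
  have key (a : V) : (insert a S).finrank K = S.finrank K + if a ∈ span K S then 0 else 1 := by
    split_ifs with h
    exacts [Set.finrank_insert_of_mem h, Set.finrank_insert_of_notMem h]
  by_cases h₁ : S.finrank K = r + 1
  · have hfib (a : V) : (insert a S).finrank K = r + 1 ↔ a ∈ span K S := by
      rw [key]; split_ifs <;> simp_all
    rw [Nat.card_congr (Equiv.subtypeEquivRight hfib), Set.natCard_span, h₁]
    simp
  by_cases h₂ : S.finrank K = r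
  · have hfib (a : V) : (insert a S).finrank K = r + 1 ↔ a ∉ span K S := by
      rw [key]; split_ifs <;> simp_all
    rw [Nat.card_congr (Equiv.subtypeEquivRight hfib), Submodule.natCard_notMem,
      show finrank K (span K S) = r from h₂]
    simp [h₂]
  · have : IsEmpty {a : V // (insert a S).finrank K = r + 1} :=
      ⟨fun ⟨a, ha⟩ => by rw [key] at ha; split_ifs at ha <;> omega⟩
    simp [h₁, h₂]

theorem natCard_finrank_range_succ_succ (u r : ℕ) :
    (Nat.card {z : Fin (u + 1) → V // (Set.range z).finrank K = r + 1} : ℝ) =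
      Nat.card {z : Fin u → V // (Set.range z).finrank K = r + 1} * (Nat.card K : ℝ) ^ (r + 1) +
      Nat.card {z : Fin u → V // (Set.range z).finrank K = r} *
        ((Nat.card K : ℝ) ^ finrank K V - (Nat.card K : ℝ) ^ r) := by
  classical
  have := Module.finite_of_finite K (M := V)
  have := Fintype.ofFinite V
  have sum_ite (j : ℕ) (c : ℝ) :
      ∑ z : Fin u → V, (if (Set.range z).finrank K = j then c else 0) =
        Nat.card {z : Fin u → V // (Set.range z).finrank K = j} * c := by
    simp [Finset.sum_ite, Nat.card_eq_fintype_card, Fintype.card_subtype]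
  rw [natCard_subtype_fin_succ]
  push_cast
  simp only [Fin.range_cons, natCard_finrank_insert_eq, Finset.sum_add_distrib, sum_ite]

theorem natCard_finrank_range_eq (u t : ℕ) :
    (Nat.card {z : Fin u → V // (Set.range z).finrank K = t} : ℝ) =
      gaussBinom (Nat.card K) u t * Aq (Nat.card K) (finrank K V) t := by
  have hq : 1 < Nat.card K := Finite.one_lt_card
  induction u generalizing t with
  | zero =>
    rcases t with _ | r
    · simp [gaussBinom_zero_right, Aq]
    · simp [gaussBinom_zero_succ]
  | succ u ih =>
    rcases t with _ | r
    · simp [natCard_finrank_range_eq_zero, gaussBinom_zero_right, Aq]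
    · rw [natCard_finrank_range_succ_succ, ih, ih, gaussBinom_succ_succ hq, Aq_succ]
      ring

end Counting

theorem stmt16_general (q m u v w s : ℕ) (Fq F : Type) [Field Fq] [Fintype Fq] [Field F] [Algebra Fq F]
    (hq : Fintype.card Fq = q) (hm : Module.finrank Fq F = m)
    (hws : w ≤ s) (hsm : s ≤ m)
    (y : Fin v → F) (hy : rk Fq y = w) :
    (Nat.card {z : Fin u → F // rk Fq (Fin.append y z) = s} : ℝ) =
      gaussBinom q u (s - w) * Aq q (m - w) (s - w) * (q:ℝ) ^ (w * u) := by
  change (Set.range y).finrank Fq = w at hy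
  change (Nat.card {z : Fin u → F // (Set.range (Fin.append y z)).finrank Fq = s} : ℝ) = _
  rw [← Nat.card_eq_fintype_card] at hq
  rcases Nat.eq_zero_or_pos m with rfl | hm₀
  -- `finrank Fq F = 0` also covers an infinite-dimensional `F`.
  · obtain rfl : s = 0 := Nat.le_zero.mp hsm
    obtain rfl : w = 0 := Nat.le_zero.mp hws
    have hcond (z : Fin u → F) : (Set.range (Fin.append y z)).finrank Fq = 0 ↔
        (Set.range z).finrank Fq = 0 := by
      simp only [Fin.range_append, Set.finrank_eq_zero_iff (Set.finite_range _),
        Set.finrank_eq_zero_iff ((Set.finite_range _).union (Set.finite_range _)),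
        Set.union_subset_iff, (Set.finrank_eq_zero_iff (Set.finite_range y)).mp hy, true_and]
    rw [Nat.card_congr (Equiv.subtypeEquivRight hcond), natCard_finrank_range_eq_zero]
    simp [gaussBinom_zero_right, Aq]
  have : FiniteDimensional Fq F := .of_finrank_pos (hm ▸ hm₀)
  have hcond (z : Fin u → F) : (Set.range (Fin.append y z)).finrank Fq = s ↔
      (Set.range ((span Fq (Set.range y)).mkQ ∘ z)).finrank Fq = s - w := by
    rw [Fin.range_append, Set.finrank_union, ← Set.range_comp, hy]
    omega
  have hW : finrank Fq (span Fq (Set.range y)) = w := hy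
  have hquot : finrank Fq (F ⧸ span Fq (Set.range y)) = m - w := by
    have := (span Fq (Set.range y)).finrank_quotient_add_finrank
    omega
  rw [Nat.card_congr (Equiv.subtypeEquivRight hcond), natCard_subtype_mkQ_comp _
    (fun zb => (Set.range zb).finrank Fq = s - w), Module.natCard_eq_pow_finrank (K := Fq),
    Nat.card_fin]
  push_cast
  rw [natCard_finrank_range_eq, hquot, hq, hW]
  ring

/-- If `y ∈ GF(q^m)^v` has rank `w`, the number of `z ∈ GF(q^m)^u` such that `(y, z)` has
rank `s` equals `[u choose s-w]_q · A(m-w, s-w) · q^{wu}`. -/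
theorem stmt16 (q m u v w s : ℕ) (Fq F : Type) [Field Fq] [Fintype Fq] [Field F] [Algebra Fq F]
    (hq : Fintype.card Fq = q) (hm : Module.finrank Fq F = m)
    (hws : w ≤ s) (hsu : s ≤ w + u) (hsm : s ≤ m)
    (y : Fin v → F) (hy : rk Fq y = w) :
    (Nat.card {z : Fin u → F // rk Fq (Fin.append y z) = s} : ℝ) =
      gaussBinom q u (s - w) * Aq q (m - w) (s - w) * (q:ℝ) ^ (w * u) :=
  stmt16_general q m u v w s Fq F hq hm hws hsm y hy
end

section
/- Let C ⊆ GF(q^m)^n be an MRD code with n ≤ m, |C| = q^{mk}, redundancy r = n-k, minimum rank distance d = n-k+1, and error-correction capability t = ⌊(d-1)/2⌋. For u ≥ d, the number D_u of vectors of rank u within rank distance t of some codeword satisfies D_u ≤ [n choose u]_q · A(m, u-r) · V_t, where V_t = ∑_{i=0}^{t} [n choose i]_q A(m,i). -/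
/-!
Send a vector `x` of rank `ρ` to the kernel `W` of `a ↦ ∑ aᵢ xᵢ : Fq^n → F`, together with the
images of `s` fixed independent vectors spanning a space disjoint from `W`. Two vectors with the
same image differ by a vector whose kernel has dimension at least `n - ρ + s`, i.e. of rank at most
`ρ - s`. So a set of rank-`ρ` vectors whose pairwise differences have rank `> ρ - s` has at most
`[n choose n-ρ]_q · A(m, s) = [n choose ρ]_q · A(m, s)` elements (the symmetry is duality of
subspaces). A decodable vector of rank `u` lies in a translate `C + e` with `rk e ≤ t`, and two
distinct elements of one translate differ by a difference of codewords, of rank `≥ n - k + 1`;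
with `s = u - (n - k)` the bound applies to each translate, and summing over the ball of radius `t`
(counted by the same bound with `s = ρ`) gives the theorem.
-/

open Module Submodule

theorem Nat.card_eq_card_mul_of_card_fiber {α β : Type*} [Finite α] [Fintype β] (f : α → β)
    {c : ℕ} (hc : ∀ b, Nat.card {a // f a = b} = c) : Nat.card α = Nat.card β * c := by
  rw [← Nat.card_congr (Equiv.sigmaFiberEquiv f), Nat.card_sigma,
    Finset.sum_congr rfl fun b _ => hc b, Finset.sum_const, smul_eq_mul, Finset.card_univ,
    Nat.card_eq_fintype_card]

theorem cast_prod_pow_sub_pow_eq_Aq {q : ℕ} (hq : 1 ≤ q) {m j : ℕ} (hj : j ≤ m) :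
    ((∏ i : Fin j, (q ^ m - q ^ i.val) : ℕ) : ℝ) = Aq q m j := by
  rw [Nat.cast_prod, Aq, ← Fin.prod_univ_eq_prod_range]
  refine Finset.prod_congr rfl fun i _ => ?_
  rw [Nat.cast_sub (Nat.pow_le_pow_right hq (by omega))]
  push_cast
  rfl

theorem Aq_pos_s18 {q : ℕ} (hq : 2 ≤ q) {m j : ℕ} (hj : j ≤ m) : 0 < Aq q m j :=
  Finset.prod_pos fun i hi => sub_pos.mpr <|
    pow_lt_pow_right₀ (by exact_mod_cast hq) (by simp at hi; omega)

theorem Aq_nonneg {q : ℕ} (hq : 1 ≤ q) (m j : ℕ) : 0 ≤ Aq q m j := by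
  by_cases hj : j ≤ m
  · exact Finset.prod_nonneg fun i hi => sub_nonneg.mpr <|
      pow_le_pow_right₀ (by exact_mod_cast hq) (by simp at hi; omega)
  · exact (Finset.prod_eq_zero (Finset.mem_range.mpr (not_le.mp hj)) (sub_self _)).ge

theorem gaussBinom_nonneg {q : ℕ} (hq : 1 ≤ q) (n j : ℕ) : 0 ≤ gaussBinom q n j :=
  div_nonneg (Aq_nonneg hq n j) (Aq_nonneg hq j j)

theorem Submodule.card_finrank_sub_eq_card_dual {K V : Type*} [Field K] [AddCommGroup V]
    [Module K V] [FiniteDimensional K V] {j : ℕ} (hj : j ≤ finrank K V) :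
    Nat.card {W : Submodule K V // finrank K W = finrank K V - j} =
      Nat.card {W : Submodule K (Dual K V) // finrank K W = j} :=
  Nat.card_congr <| ((Subspace.orderIsoFiniteDimensional (K := K) (V := V)).toEquiv.trans
    OrderDual.ofDual).subtypeEquiv fun W => by
      have := W.finrank_add_finrank_dualAnnihilator_eq
      change _ ↔ finrank K W.dualAnnihilator = j
      omega

section SubspaceCount

variable {K V : Type*} [Field K] [Fintype K] [AddCommGroup V] [Module K V] [Finite V]

def Submodule.linearIndependentSpanEquiv {j : ℕ} (W : Submodule K V) (hW : finrank K W = j) :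
    {v : {v : Fin j → V // LinearIndependent K v} // span K (Set.range v.1) = W} ≃
      {w : Fin j → W // LinearIndependent K w} where
  toFun v := ⟨fun i => ⟨v.1.1 i, v.2.le (subset_span (Set.mem_range_self i))⟩,
    LinearIndependent.of_comp W.subtype v.1.2⟩
  invFun w := ⟨⟨W.subtype ∘ w.1, w.2.map' _ W.ker_subtype⟩, by
    apply eq_of_le_of_finrank_eq
    · rw [span_le]
      rintro _ ⟨i, rfl⟩
      exact (w.1 i).2
    · rw [finrank_span_eq_card (w.2.map' _ W.ker_subtype), Fintype.card_fin, hW]⟩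
  left_inv v := rfl
  right_inv w := rfl

theorem Submodule.card_finrank_eq_mul (j : ℕ) (hj : j ≤ finrank K V) :
    Nat.card {W : Submodule K V // finrank K W = j} *
        ∏ i : Fin j, (Fintype.card K ^ j - Fintype.card K ^ i.val) =
      ∏ i : Fin j, (Fintype.card K ^ finrank K V - Fintype.card K ^ i.val) := by
  let π : {v : Fin j → V // LinearIndependent K v} → {W : Submodule K V // finrank K W = j} :=
    fun v => ⟨span K (Set.range v.1), by rw [finrank_span_eq_card v.2, Fintype.card_fin]⟩
  have : Fintype {W : Submodule K V // finrank K W = j} := Fintype.ofFinite _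
  rw [← card_linearIndependent hj, Nat.card_eq_card_mul_of_card_fiber π fun W => ?_,
    Nat.card_eq_fintype_card]
  rw [Nat.card_congr ((Equiv.subtypeEquivRight fun v => Subtype.ext_iff).trans
    (W.1.linearIndependentSpanEquiv W.2)), card_linearIndependent W.2.ge, W.2]

theorem card_linearIndependent_eq_Aq {s : ℕ} (hs : s ≤ finrank K V) :
    (Nat.card {v : Fin s → V // LinearIndependent K v} : ℝ) =
      Aq (Fintype.card K) (finrank K V) s := by
  rw [card_linearIndependent hs, cast_prod_pow_sub_pow_eq_Aq Fintype.card_pos hs]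

theorem Submodule.card_finrank_eq_gaussBinom {j : ℕ} (hj : j ≤ finrank K V) :
    (Nat.card {W : Submodule K V // finrank K W = j} : ℝ) =
      gaussBinom (Fintype.card K) (finrank K V) j := by
  have h := congrArg (Nat.cast : ℕ → ℝ) (card_finrank_eq_mul (K := K) (V := V) j hj)
  rw [Nat.cast_mul, cast_prod_pow_sub_pow_eq_Aq Fintype.card_pos le_rfl,
    cast_prod_pow_sub_pow_eq_Aq Fintype.card_pos hj] at h
  rw [gaussBinom, ← h, mul_div_cancel_right₀ _ (Aq_pos_s18 Fintype.one_lt_card le_rfl).ne']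

theorem Submodule.card_finrank_sub_eq_gaussBinom {j : ℕ} (hj : j ≤ finrank K V) :
    (Nat.card {W : Submodule K V // finrank K W = finrank K V - j} : ℝ) =
      gaussBinom (Fintype.card K) (finrank K V) j := by
  have : Finite (Dual K V) := Module.finite_of_finite K
  rw [card_finrank_sub_eq_card_dual hj, card_finrank_eq_gaussBinom,
    Subspace.dual_finrank_eq]
  rwa [Subspace.dual_finrank_eq]

end SubspaceCount

theorem Submodule.exists_linearIndependent_disjoint {K V : Type*} [Field K] [AddCommGroup V]
    [Module K V] [FiniteDimensional K V] (W : Submodule K V) {s : ℕ}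
    (hs : finrank K W + s ≤ finrank K V) :
    ∃ w : Fin s → V, LinearIndependent K w ∧ Disjoint W (span K (Set.range w)) := by
  obtain ⟨W', hW'⟩ := W.exists_isCompl
  have hs' : s ≤ finrank K W' := by
    have := finrank_add_eq_of_isCompl hW'
    omega
  let b := Module.finBasis K W'
  refine ⟨W'.subtype ∘ b ∘ Fin.castLE hs', ?_, hW'.disjoint.mono_right ?_⟩
  · exact (b.linearIndependent.comp _ (Fin.castLE_injective hs')).map' _ W'.ker_subtype
  · rw [span_le]
    rintro _ ⟨i, rfl⟩
    exact (b _).2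

theorem LinearMap.finrank_ker_add_le_finrank_ker_sub {K V M : Type*} [Field K] [AddCommGroup V]
    [Module K V] [FiniteDimensional K V] [AddCommGroup M] [Module K M] {f g : V →ₗ[K] M}
    (hker : LinearMap.ker g = LinearMap.ker f) {s : ℕ} {w : Fin s → V}
    (hw : LinearIndependent K w)
    (hdisj : Disjoint (LinearMap.ker f) (span K (Set.range w))) (hfg : f ∘ w = g ∘ w) :
    finrank K (LinearMap.ker f) + s ≤ finrank K (LinearMap.ker (f - g)) := by
  have hsup : LinearMap.ker f ⊔ span K (Set.range w) ≤ LinearMap.ker (f - g) := by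
    refine sup_le (fun v hv => ?_) (span_le.mpr ?_)
    · have hgv : v ∈ LinearMap.ker g := hker ▸ hv
      rw [LinearMap.mem_ker] at hv hgv ⊢
      simp [hv, hgv]
    · rintro _ ⟨i, rfl⟩
      simpa [sub_eq_zero] using congrFun hfg i
  calc finrank K (LinearMap.ker f) + s
        = finrank K ↥(LinearMap.ker f ⊔ span K (Set.range w)) := by
        have := Submodule.finrank_sup_add_finrank_inf_eq (LinearMap.ker f) (span K (Set.range w))
        rw [disjoint_iff.mp hdisj, finrank_bot, finrank_span_eq_card hw, Fintype.card_fin] at this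
        omega
    _ ≤ _ := finrank_mono hsup

theorem Fintype.linearCombination_sub {α R M : Type*} [Fintype α] [CommRing R] [AddCommGroup M]
    [Module R M] (x y : α → M) :
    Fintype.linearCombination R (x - y) =
      Fintype.linearCombination R x - Fintype.linearCombination R y := by
  ext v
  simp [Fintype.linearCombination_apply, smul_sub]

section Rank

variable {K F : Type*} [Field K] [Field F] [Algebra K F] {n : ℕ}

theorem rk_add_finrank_ker (x : Fin n → F) :
    rk K x + finrank K (LinearMap.ker (Fintype.linearCombination K x)) = n := by
  rw [rk, ← Fintype.range_linearCombination, LinearMap.finrank_range_add_finrank_ker,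
    finrank_fin_fun]

theorem rk_le (x : Fin n → F) : rk K x ≤ n := by
  have := rk_add_finrank_ker (K := K) x
  omega

theorem rk_eq_zero_iff {x : Fin n → F} : rk K x = 0 ↔ x = 0 := by
  have := FiniteDimensional.span_of_finite K (Set.finite_range x)
  rw [rk, Submodule.finrank_eq_zero, span_eq_bot, Set.forall_mem_range, funext_iff]
  rfl

variable [Fintype K] [Finite F]

theorem ncard_le_card_submodule_mul_card_linearIndependent {ρ s : ℕ} (hsρ : s ≤ ρ)
    (hρn : ρ ≤ n) {S : Set (Fin n → F)} (hS : ∀ x ∈ S, rk K x = ρ)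
    (hsep : ∀ x ∈ S, ∀ y ∈ S, x ≠ y → ρ - s < rk K (x - y)) :
    S.ncard ≤ Nat.card {W : Submodule K (Fin n → K) // finrank K W = n - ρ} *
      Nat.card {z : Fin s → F // LinearIndependent K z} := by
  have hw (W : {W : Submodule K (Fin n → K) // finrank K W = n - ρ}) :
      ∃ w : Fin s → Fin n → K, LinearIndependent K w ∧ Disjoint W.1 (span K (Set.range w)) :=
    exists_linearIndependent_disjoint W.1 (by rw [W.2, finrank_fin_fun]; omega)
  choose w hwli hwdisj using hw
  let kerOf (x : S) : {W : Submodule K (Fin n → K) // finrank K W = n - ρ} :=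
    ⟨LinearMap.ker (Fintype.linearCombination K x.1), by
      have := rk_add_finrank_ker (K := K) x.1
      rw [hS x x.2] at this
      omega⟩
  let Φ (x : S) : _ × {z : Fin s → F // LinearIndependent K z} :=
    (kerOf x, ⟨Fintype.linearCombination K x.1 ∘ w (kerOf x), (hwli _).map (hwdisj _).symm⟩)
  have hΦ : Function.Injective Φ := by
    intro x y hxy
    obtain ⟨hK, hval⟩ := Prod.mk.inj hxy
    replace hval := congrArg Subtype.val hval
    simp only at hval
    rw [← hK] at hval
    by_contra hne
    have hlt := hsep x x.2 y y.2 (Subtype.coe_ne_coe.mpr hne)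
    have hle := LinearMap.finrank_ker_add_le_finrank_ker_sub (congrArg Subtype.val hK).symm
      (hwli (kerOf x)) (hwdisj (kerOf x)) hval
    have hrk := rk_add_finrank_ker (K := K) (x.1 - y.1)
    rw [Fintype.linearCombination_sub, (kerOf x).2] at *
    omega
  rw [← Nat.card_coe_set_eq, ← Nat.card_prod]
  exact Nat.card_le_card_of_injective Φ hΦ

theorem ncard_le_gaussBinom_mul_Aq {ρ s : ℕ} (hsρ : s ≤ ρ)
    (hnm : n ≤ finrank K F) {S : Set (Fin n → F)} (hS : ∀ x ∈ S, rk K x = ρ)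
    (hsep : ∀ x ∈ S, ∀ y ∈ S, x ≠ y → ρ - s < rk K (x - y)) :
    (S.ncard : ℝ) ≤ gaussBinom (Fintype.card K) n ρ * Aq (Fintype.card K) (finrank K F) s := by
  rcases lt_or_ge n ρ with hnρ | hρn
  · have hS : S = ∅ :=
      Set.eq_empty_of_forall_notMem fun x hx => (rk_le x).not_gt (hS x hx ▸ hnρ)
    rw [hS, Set.ncard_empty, Nat.cast_zero]
    exact mul_nonneg (gaussBinom_nonneg Fintype.card_pos _ _) (Aq_nonneg Fintype.card_pos _ _)
  have hsub := Submodule.card_finrank_sub_eq_gaussBinom (K := K) (V := Fin n → K)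
    (j := ρ) (by rwa [finrank_fin_fun])
  rw [finrank_fin_fun] at hsub
  rw [← hsub, ← card_linearIndependent_eq_Aq (by omega)]
  exact_mod_cast ncard_le_card_submodule_mul_card_linearIndependent hsρ hρn hS hsep

theorem ncard_rk_le_le_sum (hnm : n ≤ finrank K F) (t : ℕ) :
    ({x : Fin n → F | rk K x ≤ t}.ncard : ℝ) ≤ ∑ i ∈ Finset.range (t + 1),
      gaussBinom (Fintype.card K) n i * Aq (Fintype.card K) (finrank K F) i := by
  have hunion :
      {x : Fin n → F | rk K x ≤ t} = ⋃ i ∈ Finset.range (t + 1), {x | rk K x = i} := by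
    ext x
    simp
  rw [hunion]
  refine (Nat.cast_le.mpr (Finset.set_ncard_biUnion_le _ _)).trans ?_
  push_cast
  refine Finset.sum_le_sum fun i _ => ncard_le_gaussBinom_mul_Aq le_rfl hnm (fun x hx => hx)
    fun x _ y _ hxy => ?_
  rw [Nat.sub_self, Nat.pos_iff_ne_zero, Ne, rk_eq_zero_iff, sub_eq_zero]
  exact hxy

theorem ncard_decodable_le {C : Set (Fin n → F)} {d : ℕ}
    (hC : ∀ c ∈ C, ∀ c' ∈ C, c ≠ c' → d ≤ rk K (c - c')) {ρ s : ℕ} (hsρ : s ≤ ρ)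
    (hρ : ρ < d + s) (hnm : n ≤ finrank K F) (t : ℕ) :
    ({x : Fin n → F | rk K x = ρ ∧ ∃ c ∈ C, rk K (x - c) ≤ t}.ncard : ℝ) ≤
      gaussBinom (Fintype.card K) n ρ * Aq (Fintype.card K) (finrank K F) s *
        {e : Fin n → F | rk K e ≤ t}.ncard := by
  set B := {e : Fin n → F | rk K e ≤ t}
  have hB : B.Finite := Set.toFinite B
  have hsub : {x | rk K x = ρ ∧ ∃ c ∈ C, rk K (x - c) ≤ t} ⊆
      ⋃ e ∈ hB.toFinset, {x | rk K x = ρ ∧ x - e ∈ C} := by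
    rintro x ⟨hx, c, hc, hxc⟩
    simp only [Set.mem_iUnion, Set.Finite.mem_toFinset]
    exact ⟨x - c, hxc, hx, by simpa using hc⟩
  have htranslate (e : Fin n → F) : ({x | rk K x = ρ ∧ x - e ∈ C}.ncard : ℝ) ≤
      gaussBinom (Fintype.card K) n ρ * Aq (Fintype.card K) (finrank K F) s := by
    refine ncard_le_gaussBinom_mul_Aq hsρ hnm (fun x hx => hx.1) fun x hx y hy hxy => ?_
    have := hC _ hx.2 _ hy.2 (sub_left_injective.ne hxy)
    rw [sub_sub_sub_cancel_right] at this
    omega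
  calc _ ≤ (((⋃ e ∈ hB.toFinset, {x | rk K x = ρ ∧ x - e ∈ C}).ncard : ℕ) : ℝ) :=
        Nat.cast_le.mpr (Set.ncard_le_ncard hsub)
    _ ≤ ∑ e ∈ hB.toFinset, ({x | rk K x = ρ ∧ x - e ∈ C}.ncard : ℝ) := by
        exact_mod_cast Finset.set_ncard_biUnion_le _ _
    _ ≤ ∑ _e ∈ hB.toFinset,
          gaussBinom (Fintype.card K) n ρ * Aq (Fintype.card K) (finrank K F) s :=
        Finset.sum_le_sum fun e _ => htranslate e
    _ = _ := by
        rw [Finset.sum_const, nsmul_eq_mul, Set.ncard_eq_toFinset_card B hB]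
        ring

end Rank

theorem stmt18_general (q m n k u : ℕ) (Fq F : Type) [Field Fq] [Fintype Fq] [Field F] [Algebra Fq F]
    (hq : Fintype.card Fq = q) (hm : Module.finrank Fq F = m)
    (hk : 1 ≤ k) (hkn : k ≤ n) (hnm : n ≤ m)
    (C : Set (Fin n → F))
    (hMRD : ∀ c ∈ C, ∀ c' ∈ C, c ≠ c' → n - k + 1 ≤ rk Fq (c - c'))
    (t : ℕ) (hu : n - k + 1 ≤ u) :
    (Nat.card {x : Fin n → F // rk Fq x = u ∧ ∃ c ∈ C, rk Fq (x - c) ≤ t} : ℝ) ≤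
      gaussBinom q n u * Aq q m (u - (n - k)) *
        (∑ i ∈ Finset.range (t + 1), gaussBinom q n i * Aq q m i) := by
  subst hq hm
  have : Module.Finite Fq F := Module.finite_of_finrank_pos (by omega)
  have : Finite F := Module.finite_of_finite Fq
  calc _ ≤ _ := ncard_decodable_le hMRD (s := u - (n - k)) (by omega) (by omega) hnm t
    _ ≤ _ := mul_le_mul_of_nonneg_left (ncard_rk_le_le_sum hnm t) <|
        mul_nonneg (gaussBinom_nonneg Fintype.card_pos _ _) (Aq_nonneg Fintype.card_pos _ _)

/-- For an MRD code with redundancy `r = n - k`, minimum rank distance `d = n - k + 1` and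
`t = ⌊(d-1)/2⌋`, and `u ≥ d`, the number of decodable vectors of rank `u` satisfies
`D_u ≤ [n choose u]_q · A(m, u - r) · V_t` where `V_t = ∑_{i=0}^t [n choose i]_q A(m,i)`. -/
theorem stmt18 (q m n k u : ℕ) (Fq F : Type) [Field Fq] [Fintype Fq] [Field F] [Algebra Fq F]
    (hq : Fintype.card Fq = q) (hm : Module.finrank Fq F = m)
    (hk : 1 ≤ k) (hkn : k ≤ n) (hnm : n ≤ m)
    (C : Set (Fin n → F)) (h0 : 0 ∈ C) (hcard : Nat.card C = q ^ (m * k))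
    (hMRD : ∀ c ∈ C, ∀ c' ∈ C, c ≠ c' → n - k + 1 ≤ rk Fq (c - c'))
    (t : ℕ) (hT : t = (n - k) / 2) (hu : n - k + 1 ≤ u) :
    (Nat.card {x : Fin n → F // rk Fq x = u ∧ ∃ c ∈ C, rk Fq (x - c) ≤ t} : ℝ) ≤
      gaussBinom q n u * Aq q m (u - (n - k)) *
        (∑ i ∈ Finset.range (t + 1), gaussBinom q n i * Aq q m i) :=
  stmt18_general q m n k u Fq F hq hm hk hkn hnm C hMRD t hu
end
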